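/- For a, b with 0 ≤ a < b ≤ 1 and (1-a)·b > 1/2, define p = 1/(2(1-a)) and F(θ) = p·((1-2a) + √(a² + (1-a)²)·(2θ-1)/√(θ² + (1-θ)²)) for θ ∈ [a, c*], where c* = (1-a-2b+4ab-2ab²)/(1-4(1-a)b+2(1-2a)b²). Then F(a) = 0, F is strictly increasing on [a, c*], and F satisfies, with Λ(θ) = ∫_a^θ F(t) dt, the identity (1-θ)·p + (1-2θ)·Λ(θ) + ((1-θ)² + θ²)·F(θ) = 1/2 for all θ ∈ [a, c*]. -/

import Mathlib

open MeasureTheory Set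

/-- Equilibrium failure probability `p = 1/(2(1-a))`. -/
noncomputable def pEq (a : ℝ) : ℝ := 1 / (2 * (1 - a))

/-- Top of the continuous part of the equilibrium support. -/
noncomputable def cStar (a b : ℝ) : ℝ :=
  (1 - a - 2*b + 4*a*b - 2*a*b^2) / (1 - 4*(1-a)*b + 2*(1-2*a)*b^2)

/-- The continuous part of the equilibrium cdf for firms restricted to `[a,b]`. -/
noncomputable def Fab (a θ : ℝ) : ℝ :=
  pEq a * ((1 - 2*a) + Real.sqrt (a^2 + (1-a)^2) * (2*θ - 1) / Real.sqrt (θ^2 + (1-θ)^2))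

/-!
Write `ρ θ = √(θ² + (1-θ)²)` and `K = ρ a`. Then `Fab a θ = p(1-2a) + pK·(2θ-1)/ρ θ`, and
`(2θ-1)/ρ θ` has derivative `1/ρ θ ³ > 0`, which gives monotonicity. Since `ρ' = (2θ-1)/ρ`, the
function `p((1-2a)θ + K ρ θ)` is a primitive of `Fab a`, so `Λ` is explicit; in the identity the
terms `± pK(2θ-1)ρ θ` cancel and, using `ρ² = θ² + (1-θ)²` at `θ` and at `a`, the left side
reduces to `p(1-a) = 1/2`.
-/

open Real

lemma sq_add_one_sub_sq_pos (θ : ℝ) : 0 < θ ^ 2 + (1 - θ) ^ 2 := by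
  nlinarith [sq_nonneg (2 * θ - 1)]

lemma sqrt_sq_add_one_sub_sq_pos (θ : ℝ) : 0 < √(θ ^ 2 + (1 - θ) ^ 2) :=
  sqrt_pos.2 (sq_add_one_sub_sq_pos θ)

lemma sq_sqrt_sq_add_one_sub_sq (θ : ℝ) : √(θ ^ 2 + (1 - θ) ^ 2) ^ 2 = θ ^ 2 + (1 - θ) ^ 2 :=
  sq_sqrt (sq_add_one_sub_sq_pos θ).le

lemma hasDerivAt_sqrt_sq_add_one_sub_sq (θ : ℝ) :
    HasDerivAt (fun t => √(t ^ 2 + (1 - t) ^ 2)) ((2 * θ - 1) / √(θ ^ 2 + (1 - θ) ^ 2)) θ := by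
  have hq : HasDerivAt (fun t : ℝ => t ^ 2 + (1 - t) ^ 2) (4 * θ - 2) θ := by
    refine ((hasDerivAt_pow 2 θ).add (((hasDerivAt_id θ).const_sub 1).pow 2)).congr_deriv ?_
    simp only [id]
    ring
  refine (hq.sqrt (sq_add_one_sub_sq_pos θ).ne').congr_deriv ?_
  field_simp [(sqrt_sq_add_one_sub_sq_pos θ).ne']
  ring

lemma hasDerivAt_two_mul_sub_one_div_sqrt (θ : ℝ) :
    HasDerivAt (fun t => (2 * t - 1) / √(t ^ 2 + (1 - t) ^ 2))
      (1 / √(θ ^ 2 + (1 - θ) ^ 2) ^ 3) θ := by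
  have hG := (sqrt_sq_add_one_sub_sq_pos θ).ne'
  have hnum : HasDerivAt (fun t : ℝ => 2 * t - 1) 2 θ := by
    simpa using ((hasDerivAt_id θ).const_mul 2).sub_const 1
  refine (hnum.div (hasDerivAt_sqrt_sq_add_one_sub_sq θ) hG).congr_deriv ?_
  field_simp
  linear_combination 2 * sq_sqrt_sq_add_one_sub_sq θ

lemma strictMono_two_mul_sub_one_div_sqrt :
    StrictMono (fun θ : ℝ => (2 * θ - 1) / √(θ ^ 2 + (1 - θ) ^ 2)) :=
  strictMono_of_hasDerivAt_pos hasDerivAt_two_mul_sub_one_div_sqrt fun θ => by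
    have := sqrt_sq_add_one_sub_sq_pos θ
    positivity

lemma Fab_eq (a θ : ℝ) :
    Fab a θ = pEq a * (1 - 2 * a) +
      pEq a * √(a ^ 2 + (1 - a) ^ 2) * ((2 * θ - 1) / √(θ ^ 2 + (1 - θ) ^ 2)) := by
  unfold Fab; ring

lemma Fab_self (a : ℝ) : Fab a a = 0 := by
  have := (sqrt_sq_add_one_sub_sq_pos a).ne'
  rw [Fab_eq]
  field_simp
  ring

lemma strictMono_Fab {a : ℝ} (ha : a < 1) : StrictMono (Fab a) := by
  have hp : 0 < pEq a := one_div_pos.2 (by linarith)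
  have hK := sqrt_sq_add_one_sub_sq_pos a
  intro x y hxy
  simp only [Fab_eq]
  exact add_lt_add_right (mul_lt_mul_of_pos_left (strictMono_two_mul_sub_one_div_sqrt hxy)
    (mul_pos hp hK)) _

lemma hasDerivAt_Fab_primitive (a θ : ℝ) :
    HasDerivAt (fun t => pEq a * ((1 - 2 * a) * t + √(a ^ 2 + (1 - a) ^ 2) * √(t ^ 2 + (1 - t) ^ 2)))
      (Fab a θ) θ := by
  rw [Fab_eq]
  refine ((((hasDerivAt_id θ).const_mul (1 - 2 * a)).add
    ((hasDerivAt_sqrt_sq_add_one_sub_sq θ).const_mul √(a ^ 2 + (1 - a) ^ 2))).const_mul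
      (pEq a)).congr_deriv ?_
  ring

lemma continuous_Fab (a : ℝ) : Continuous (Fab a) := by
  unfold Fab
  fun_prop (disch := exact fun θ => (sqrt_sq_add_one_sub_sq_pos θ).ne')

lemma integral_Fab (a θ : ℝ) :
    ∫ t in a..θ, Fab a t = pEq a * ((1 - 2 * a) * (θ - a) +
      √(a ^ 2 + (1 - a) ^ 2) * (√(θ ^ 2 + (1 - θ) ^ 2) - √(a ^ 2 + (1 - a) ^ 2))) := by
  rw [intervalIntegral.integral_eq_sub_of_hasDerivAt (fun t _ => hasDerivAt_Fab_primitive a t)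
    ((continuous_Fab a).intervalIntegrable a θ)]
  ring

lemma sq_add_sq_mul_Fab (a θ : ℝ) :
    ((1 - θ) ^ 2 + θ ^ 2) * Fab a θ = pEq a * ((1 - 2 * a) * (θ ^ 2 + (1 - θ) ^ 2) +
      √(a ^ 2 + (1 - a) ^ 2) * (2 * θ - 1) * √(θ ^ 2 + (1 - θ) ^ 2)) := by
  have hG := (sqrt_sq_add_one_sub_sq_pos θ).ne'
  rw [Fab_eq]
  field_simp
  linear_combination pEq a * √(a ^ 2 + (1 - a) ^ 2) * (1 - 2 * θ) * sq_sqrt_sq_add_one_sub_sq θ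

lemma Fab_selection_prob_eq_half {a : ℝ} (ha : a ≠ 1) (θ : ℝ) :
    (1 - θ) * pEq a + (1 - 2 * θ) * (∫ t in a..θ, Fab a t)
      + ((1 - θ) ^ 2 + θ ^ 2) * Fab a θ = 1 / 2 := by
  have hp : pEq a * (1 - a) = 1 / 2 := by
    rw [pEq]
    field_simp [sub_ne_zero.2 ha.symm]
  rw [integral_Fab, sq_add_sq_mul_Fab, ← hp]
  linear_combination (-(1 - 2 * θ) * pEq a) * sq_sqrt_sq_add_one_sub_sq a

theorem stmt_16_general (a b : ℝ) (hb : b ≤ 1) (hab : a < b) :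
    Fab a a = 0 ∧
    StrictMonoOn (Fab a) (Icc a (cStar a b)) ∧
    ∀ θ ∈ Icc a (cStar a b),
      (1 - θ) * pEq a + (1 - 2*θ) * (∫ t in a..θ, Fab a t)
        + ((1-θ)^2 + θ^2) * Fab a θ = 1/2 := by
  have ha : a < 1 := hab.trans_le hb
  exact ⟨Fab_self a, (strictMono_Fab ha).strictMonoOn _,
    fun θ _ => Fab_selection_prob_eq_half ha.ne θ⟩

/-- For `0 ≤ a < b ≤ 1` with `(1-a)b > 1/2`: `Fab a a = 0`, `Fab a` is strictly
increasing on `[a, c*]`, and with `Λ(θ) = ∫_a^θ Fab a`, every `θ ∈ [a, c*]` satisfies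
`(1-θ)p + (1-2θ)Λ(θ) + ((1-θ)² + θ²)·Fab a θ = 1/2`. -/
theorem stmt_16 (a b : ℝ) (ha : 0 ≤ a) (hb : b ≤ 1) (hab : a < b)
    (h : 1/2 < (1 - a) * b) :
    Fab a a = 0 ∧
    StrictMonoOn (Fab a) (Icc a (cStar a b)) ∧
    ∀ θ ∈ Icc a (cStar a b),
      (1 - θ) * pEq a + (1 - 2*θ) * (∫ t in a..θ, Fab a t)
        + ((1-θ)^2 + θ^2) * Fab a θ = 1/2 :=
  stmt_16_general a b hb hab
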